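/- arXiv:1204.2752 — 2 statements merged into one kernel-verified Lean document; each statement's English description precedes it below -/
import Mathlib

section
/- Let Φ : A → B be a generalized channel with respect to a positively generated subspace J ⊆ A, with minimal decomposition Φ = Λ_q ∘ χ_c, where χ_c(a) = c a c*, q = supp(cc*), and Λ_q : A_q → B is a channel. Then Φ is an extreme point of C_J(A,B) if and only if Λ_q is an extreme point of C_{cJc*}(A_q, B), the set of generalized channels on A_q with respect to the subspace cJc*. -/
open Matrix ComplexOrder

variable {n m : Type*} [Fintype n] [DecidableEq n] [Fintype m] [DecidableEq m]

/-- Partial trace over the first tensor factor `B` of `B ⊗ A`,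
realized on matrices indexed by products. -/
noncomputable def ptrace (X : Matrix (m × n) (m × n) ℂ) : Matrix n n ℂ :=
  Matrix.of fun a b => ∑ i, X (i, a) (i, b)

/-- The Choi matrix of a linear map `Φ : A → B` (on full matrix algebras). -/
noncomputable def choi (Φ : Matrix n n ℂ →ₗ[ℂ] Matrix m m ℂ) : Matrix (m × n) (m × n) ℂ :=
  Matrix.of fun p q => Φ (Matrix.single p.2 q.2 1) p.1 q.1

/-- Hilbert–Schmidt orthogonal complement of a subspace. -/
noncomputable def hsPerp {k : Type*} [Fintype k] (J : Submodule ℂ (Matrix k k ℂ)) :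
    Submodule ℂ (Matrix k k ℂ) where
  carrier := {x | ∀ a ∈ J, Matrix.trace (aᴴ * x) = 0}
  add_mem' := by
    intro x y hx hy a ha
    simp [Matrix.mul_add, hx a ha, hy a ha]
  zero_mem' := by intro a ha; simp
  smul_mem' := by
    intro c x hx a ha
    simp [Matrix.mul_smul, hx a ha]

/-- Hilbert–Schmidt orthogonal complement of the transpose `J^T` of a subspace `J`. -/
def hsPerpT {k : Type*} [Fintype k] (J : Submodule ℂ (Matrix k k ℂ)) : Set (Matrix k k ℂ) :=
  {x | ∀ a ∈ J, Matrix.trace (aᵀᴴ * x) = 0}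

/-- A subspace is positively generated if it is spanned by its positive elements. -/
def PositivelyGenerated {k : Type*} [Fintype k] (J : Submodule ℂ (Matrix k k ℂ)) : Prop :=
  J = Submodule.span ℂ {a : Matrix k k ℂ | a ∈ J ∧ a.PosSemidef}

/-- `P` is the support projection of `X`: a Hermitian idempotent with the same range. -/
def IsSupportProj {k : Type*} [Fintype k] [DecidableEq k] (X P : Matrix k k ℂ) : Prop :=
  P.IsHermitian ∧ P * P = P ∧
    LinearMap.range (Matrix.toLin' P) = LinearMap.range (Matrix.toLin' X)

/-- Compression `a ↦ p a p` as a linear map. -/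
noncomputable def comprMap {k : Type*} [Fintype k] (p : Matrix k k ℂ) :
    Matrix k k ℂ →ₗ[ℂ] Matrix k k ℂ where
  toFun a := p * a * p
  map_add' a b := by simp [Matrix.mul_add, Matrix.add_mul]
  map_smul' c a := by simp [Matrix.mul_smul, Matrix.smul_mul]

/-- The map `χ_c : a ↦ c a c*` as a linear map. -/
noncomputable def sandwich {k : Type*} [Fintype k] (c : Matrix k k ℂ) :
    Matrix k k ℂ →ₗ[ℂ] Matrix k k ℂ where
  toFun a := c * a * cᴴ
  map_add' a b := by simp [Matrix.mul_add, Matrix.add_mul]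
  map_smul' t a := by simp [Matrix.mul_smul, Matrix.smul_mul]


/-! Let `e` be a pseudo-inverse of `c`, with `c e = q` and `p = e c` a projection. Composition with
`χ_c` maps the generalized channels on the corner `A_q` onto the generalized channels `Ψ` with
`Ψ ∘ χ_p = Ψ`, and composition with `χ_e` inverts it there. These maps form a face of `C_J(A, B)`:
when `Ψ` is a proper convex combination of completely positive `Ψ₁, Ψ₂`, the Choi matrix of `Ψ₁` is
dominated by a multiple of that of `Ψ`, so it is supported where that one is, which is the
invariance under `χ_p`. A linear bijection preserves extreme points, and the extreme points of a
face are the extreme points of the ambient set lying in it. -/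

open scoped Kronecker

section MatrixFacts

variable {k l l' : Type*} [Fintype l] [DecidableEq l] [Fintype l'] [DecidableEq l']

lemma exists_mul_eq_of_range_le {R : Type*} [CommRing R] {A : Matrix k l R} {B : Matrix k l' R}
    (h : LinearMap.range (Matrix.toLin' A) ≤ LinearMap.range (Matrix.toLin' B)) :
    ∃ D : Matrix l' l R, B * D = A := by
  choose y hy using fun j => h (LinearMap.mem_range_self _ (Pi.single j 1))
  refine ⟨Matrix.of fun i j => y j i, ?_⟩
  refine Matrix.ext_of_mulVec_single fun j => ?_
  rw [← Matrix.mulVec_mulVec, Matrix.mulVec_single_one]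
  exact hy j

variable [Fintype k] {𝕜 : Type*} [RCLike 𝕜]

lemma Matrix.PosSemidef.mul_eq_zero_of_add_mul_eq_zero {X Y : Matrix k k 𝕜} {R : Matrix k l 𝕜}
    (hX : X.PosSemidef) (hY : Y.PosSemidef) (h : (X + Y) * R = 0) : X * R = 0 := by
  have hvec : ∀ u, (X + Y) *ᵥ u = 0 → X *ᵥ u = 0 := by
    intro u hu
    have hsum : star u ⬝ᵥ X *ᵥ u + star u ⬝ᵥ Y *ᵥ u = 0 := by
      rw [← dotProduct_add, ← Matrix.add_mulVec, hu, dotProduct_zero]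
    rw [← hX.dotProduct_mulVec_zero_iff]
    exact ((add_eq_zero_iff_of_nonneg (hX.dotProduct_mulVec_nonneg u)
      (hY.dotProduct_mulVec_nonneg u)).1 hsum).1
  refine Matrix.ext_of_mulVec_single fun j => ?_
  rw [← Matrix.mulVec_mulVec, Matrix.zero_mulVec]
  exact hvec _ (by rw [Matrix.mulVec_mulVec, h, Matrix.zero_mulVec])

end MatrixFacts

lemma Set.LeftInvOn.map_mem_extremePoints_image_iff {𝕜 E F : Type*} [Ring 𝕜] [PartialOrder 𝕜]
    [IsOrderedRing 𝕜] [AddCommGroup E] [Module 𝕜 E] [AddCommGroup F] [Module 𝕜 F]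
    {f : E →ₗ[𝕜] F} {g : F →ₗ[𝕜] E} {s : Set E} (hgf : Set.LeftInvOn g f s) {x : E}
    (hx : x ∈ s) : f x ∈ (f '' s).extremePoints 𝕜 ↔ x ∈ s.extremePoints 𝕜 := by
  have himage : ∀ x₁ x₂, f '' openSegment 𝕜 x₁ x₂ = openSegment 𝕜 (f x₁) (f x₂) :=
    image_openSegment 𝕜 f.toAffineMap
  constructor
  · rintro ⟨-, hfx⟩
    refine ⟨hx, fun x₁ h₁ x₂ h₂ hx₁₂ => hgf.injOn h₁ hx ?_⟩
    exact hfx (Set.mem_image_of_mem f h₁) (Set.mem_image_of_mem f h₂)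
      (himage x₁ x₂ ▸ Set.mem_image_of_mem f hx₁₂)
  · rintro ⟨-, hx'⟩
    refine ⟨Set.mem_image_of_mem f hx, ?_⟩
    rintro _ ⟨x₁, h₁, rfl⟩ _ ⟨x₂, h₂, rfl⟩ hfx
    obtain ⟨z, ⟨a, b, ha, hb, hab, rfl⟩, hz⟩ := (himage x₁ x₂).symm ▸ hfx
    -- `g` inverts `f` on the whole segment by linearity, so the preimage of `f x` on it is `x`
    have hzx : a • x₁ + b • x₂ = x := by
      rw [← hgf hx, ← hz, map_add, map_smul, map_smul, map_add, map_smul, map_smul, hgf h₁, hgf h₂]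
    rw [hx' h₁ h₂ ⟨a, b, ha, hb, hab, hzx⟩]

namespace IsSupportProj

variable {k : Type*} [Fintype k] [DecidableEq k] {X P c q : Matrix k k ℂ}

lemma proj_mul (hP : IsSupportProj X P) : P * X = X := by
  obtain ⟨D, hD⟩ := exists_mul_eq_of_range_le hP.2.2.ge
  rw [← hD, ← Matrix.mul_assoc, hP.2.1]

lemma exists_mul_eq_proj (hP : IsSupportProj X P) : ∃ D, X * D = P :=
  exists_mul_eq_of_range_le hP.2.2.le

lemma proj_mul_of_mul_conjTranspose (hq : IsSupportProj (c * cᴴ) q) : q * c = c := by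
  have h : (1 - q) * (c * cᴴ) = 0 := by rw [Matrix.sub_mul, Matrix.one_mul, hq.proj_mul, sub_self]
  rw [Matrix.mul_self_mul_conjTranspose_eq_zero, Matrix.sub_mul, Matrix.one_mul, sub_eq_zero] at h
  exact h.symm

lemma exists_pseudoInverse (hq : IsSupportProj (c * cᴴ) q) :
    ∃ e, c * e = q ∧ e * q = e ∧ IsStarProjection (e * c) := by
  obtain ⟨D, hD⟩ := hq.exists_mul_eq_proj
  have hqH : qᴴ = q := hq.1
  have hMq : c * cᴴ * q = c * cᴴ := by
    simpa [Matrix.conjTranspose_mul, hqH, Matrix.mul_assoc] using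
      congrArg Matrix.conjTranspose hq.proj_mul
  have hDM : Dᴴ * (c * cᴴ) = q := by
    simpa [Matrix.conjTranspose_mul, hqH, Matrix.mul_assoc] using congrArg Matrix.conjTranspose hD
  have hw : q * D = Dᴴ * q := by conv_lhs => rw [← hDM, Matrix.mul_assoc, hD]
  have hce : c * (cᴴ * (q * D)) = q := by
    rw [← Matrix.mul_assoc, ← Matrix.mul_assoc, hMq, hD]
  have heq : cᴴ * (q * D) * q = cᴴ * (q * D) := by
    rw [hw, Matrix.mul_assoc, Matrix.mul_assoc, hq.2.1]
  refine ⟨cᴴ * (q * D), hce, heq, ?_, ?_⟩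
  · rw [IsIdempotentElem, Matrix.mul_assoc, ← Matrix.mul_assoc c, hce, ← Matrix.mul_assoc, heq]
  · rw [IsSelfAdjoint, Matrix.star_eq_conjTranspose]
    simp only [Matrix.conjTranspose_mul, Matrix.conjTranspose_conjTranspose, hqH, ← hw,
      Matrix.mul_assoc]

end IsSupportProj

@[simp] lemma sandwich_apply {k : Type*} [Fintype k] (c a : Matrix k k ℂ) :
    sandwich c a = c * a * cᴴ := rfl

lemma sandwich_comp {k : Type*} [Fintype k] (c d : Matrix k k ℂ) :
    sandwich c ∘ₗ sandwich d = sandwich (c * d) :=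
  LinearMap.ext fun a => by simp [Matrix.conjTranspose_mul, Matrix.mul_assoc]

lemma comprMap_eq_sandwich {k : Type*} [Fintype k] {q : Matrix k k ℂ} (hq : qᴴ = q) :
    comprMap q = sandwich q :=
  LinearMap.ext fun a => by rw [sandwich_apply, hq]; rfl

omit [Fintype n] [Fintype m] [DecidableEq m] in
lemma choi_apply (Ψ : Matrix n n ℂ →ₗ[ℂ] Matrix m m ℂ) (r s : m) (i j : n) :
    choi Ψ (r, i) (s, j) = Ψ (Matrix.single i j 1) r s := rfl

omit [Fintype m] [DecidableEq m] in
lemma apply_eq_sum_choi (Ψ : Matrix n n ℂ →ₗ[ℂ] Matrix m m ℂ) (a : Matrix n n ℂ) (r s : m) :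
    Ψ a r s = ∑ i, ∑ j, a i j * choi Ψ (r, i) (s, j) := by
  conv_lhs => rw [Matrix.matrix_eq_sum_single a]
  simp only [map_sum, Matrix.sum_apply, choi_apply]
  refine Finset.sum_congr rfl fun i _ => Finset.sum_congr rfl fun j _ => ?_
  rw [show Matrix.single i j (a i j) = a i j • Matrix.single i j (1 : ℂ) by
    rw [Matrix.smul_single, smul_eq_mul, mul_one], map_smul, Matrix.smul_apply, smul_eq_mul]

omit [Fintype m] [DecidableEq m] in
lemma choi_injective : Function.Injective (choi : (Matrix n n ℂ →ₗ[ℂ] Matrix m m ℂ) → _) :=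
  fun Ψ Ψ' h => LinearMap.ext fun a => by ext r s; simp only [apply_eq_sum_choi, h]

omit [Fintype n] [Fintype m] [DecidableEq m] in
@[simp] lemma choi_add (Ψ Ψ' : Matrix n n ℂ →ₗ[ℂ] Matrix m m ℂ) :
    choi (Ψ + Ψ') = choi Ψ + choi Ψ' := rfl

omit [Fintype n] [Fintype m] [DecidableEq m] in
@[simp] lemma choi_smul (t : ℝ) (Ψ : Matrix n n ℂ →ₗ[ℂ] Matrix m m ℂ) :
    choi (t • Ψ) = t • choi Ψ := rfl

lemma choi_comp_sandwich (Ψ : Matrix n n ℂ →ₗ[ℂ] Matrix m m ℂ) (e : Matrix n n ℂ) :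
    choi (Ψ ∘ₗ sandwich e) = (1 ⊗ₖ eᵀ) * choi Ψ * (1 ⊗ₖ eᵀ)ᴴ := by
  ext ⟨r, i⟩ ⟨s, j⟩
  rw [choi_apply, LinearMap.comp_apply, sandwich_apply, apply_eq_sum_choi]
  simp only [Matrix.mul_apply, Matrix.single_apply, ite_and, mul_ite, mul_one, mul_zero,
    Finset.sum_ite_eq, Finset.mem_univ, ↓reduceIte, Matrix.conjTranspose_apply, RCLike.star_def,
    ite_mul, zero_mul, Matrix.kroneckerMap_apply, Matrix.one_apply, Matrix.transpose_apply, one_mul,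
    Fintype.sum_prod_type, Finset.sum_ite_irrel, Finset.sum_const_zero, apply_ite (starRingEnd ℂ),
    map_zero, Finset.sum_mul]
  rw [Finset.sum_comm]
  exact Finset.sum_congr rfl fun _ _ => Finset.sum_congr rfl fun _ _ => by ring

/-- Compression by an idempotent cuts out a face of the cone of positive semidefinite matrices. -/
lemma Matrix.PosSemidef.conj_eq_self_of_conj_add_eq {k : Type*} [Fintype k] [DecidableEq k]
    {𝕜 : Type*} [RCLike 𝕜] {X Y P : Matrix k k 𝕜} (hX : X.PosSemidef) (hY : Y.PosSemidef)
    (hP : IsIdempotentElem P) (h : P * (X + Y) * Pᴴ = X + Y) : P * X * Pᴴ = X := by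
  have hPP : Pᴴ * Pᴴ = Pᴴ := by rw [← Matrix.conjTranspose_mul, hP.eq]
  have hsum : (X + Y) * (1 - Pᴴ) = 0 := by
    rw [Matrix.mul_sub, Matrix.mul_one, sub_eq_zero]
    calc X + Y = P * (X + Y) * Pᴴ * Pᴴ := by rw [Matrix.mul_assoc _ Pᴴ, hPP, h]
      _ = (X + Y) * Pᴴ := by rw [h]
  have hXP : X * Pᴴ = X := by
    have := hX.mul_eq_zero_of_add_mul_eq_zero hY hsum
    rwa [Matrix.mul_sub, Matrix.mul_one, sub_eq_zero, eq_comm] at this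
  have hPX : P * X = X := by
    simpa [Matrix.conjTranspose_mul, hX.1.eq] using congrArg Matrix.conjTranspose hXP
  rw [hPX, hXP]

lemma comp_sandwich_eq_of_mem_openSegment {p : Matrix n n ℂ} (hp : IsIdempotentElem p)
    {Ψ Ψ₁ Ψ₂ : Matrix n n ℂ →ₗ[ℂ] Matrix m m ℂ} (h₁ : (choi Ψ₁).PosSemidef)
    (h₂ : (choi Ψ₂).PosSemidef) (hΨ : Ψ ∈ openSegment ℝ Ψ₁ Ψ₂)
    (hΨp : Ψ ∘ₗ sandwich p = Ψ) : Ψ₁ ∘ₗ sandwich p = Ψ₁ := by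
  obtain ⟨a, b, ha, hb, -, rfl⟩ := hΨ
  have hP : IsIdempotentElem ((1 : Matrix m m ℂ) ⊗ₖ pᵀ) := by
    rw [IsIdempotentElem, ← Matrix.mul_kronecker_mul, Matrix.one_mul, ← Matrix.transpose_mul,
      hp.eq]
  have hcompr := (h₁.smul ha.le).conj_eq_self_of_conj_add_eq (h₂.smul hb.le) hP
    (by rw [← choi_smul, ← choi_smul, ← choi_add, ← choi_comp_sandwich, hΨp])
  rw [Matrix.mul_smul, Matrix.smul_mul] at hcompr
  apply choi_injective
  rw [choi_comp_sandwich]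
  exact smul_right_injective _ ha.ne' hcompr

lemma PositivelyGenerated.conjTranspose_mem {k : Type*} [Fintype k]
    {J : Submodule ℂ (Matrix k k ℂ)} (hJ : PositivelyGenerated J) {a : Matrix k k ℂ}
    (ha : a ∈ J) : aᴴ ∈ J := by
  rw [hJ] at ha
  induction ha using Submodule.span_induction with
  | mem x hx => rw [hx.2.1.eq]; exact hx.1
  | zero => simp
  | add x y _ _ hx hy => simpa using J.add_mem hx hy
  | smul t x _ hx => simpa using J.smul_mem (star t) hx

lemma trace_sandwich_eq_of_mem {k : Type*} [Fintype k] [DecidableEq k]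
    {J : Submodule ℂ (Matrix k k ℂ)} (hJ : PositivelyGenerated J) {c : Matrix k k ℂ}
    (hc : cᴴ * c - 1 ∈ hsPerp J) {a : Matrix k k ℂ} (ha : a ∈ J) :
    Matrix.trace (c * a * cᴴ) = Matrix.trace a := by
  have h := hc aᴴ (hJ.conjTranspose_mem ha)
  rw [Matrix.conjTranspose_conjTranspose, Matrix.mul_sub, Matrix.mul_one, Matrix.trace_sub,
    sub_eq_zero] at h
  rw [Matrix.trace_mul_cycle, Matrix.trace_mul_comm, h]

/-- `C_J(A, B)`. -/
def generalizedChannels (J : Submodule ℂ (Matrix n n ℂ)) :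
    Set (Matrix n n ℂ →ₗ[ℂ] Matrix m m ℂ) :=
  {Ψ | (choi Ψ).PosSemidef ∧ ∀ a ∈ J, Matrix.trace (Ψ a) = Matrix.trace a}

/-- `C_{cJc*}(A_q, B)`, where a map on `A_q = qAq` is modelled as a map on `A` that factors
through the compression by `q`. -/
def cornerGeneralizedChannels (J : Submodule ℂ (Matrix n n ℂ)) (c q : Matrix n n ℂ) :
    Set (Matrix n n ℂ →ₗ[ℂ] Matrix m m ℂ) :=
  {Ψ | (choi Ψ).PosSemidef ∧ Ψ ∘ₗ comprMap q = Ψ ∧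
    ∀ a ∈ J, Matrix.trace (Ψ (c * a * cᴴ)) = Matrix.trace (c * a * cᴴ)}

lemma isExtreme_generalizedChannels_inter (J : Submodule ℂ (Matrix n n ℂ)) {p : Matrix n n ℂ}
    (hp : IsIdempotentElem p) :
    IsExtreme ℝ (generalizedChannels (m := m) J)
      (generalizedChannels J ∩ {Ψ | Ψ ∘ₗ sandwich p = Ψ}) :=
  ⟨Set.inter_subset_left, fun _ h₁ _ h₂ _ hΨ hseg =>
    ⟨h₁, comp_sandwich_eq_of_mem_openSegment hp h₁.1 h₂.1 hseg hΨ.2⟩⟩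

section Decomposition

variable {J : Submodule ℂ (Matrix n n ℂ)} {c q e : Matrix n n ℂ}

omit [DecidableEq m] in
lemma leftInvOn_lcomp_sandwich (hq : qᴴ = q) (hce : c * e = q) :
    Set.LeftInvOn (LinearMap.lcomp ℝ (Matrix m m ℂ) (sandwich e))
      (LinearMap.lcomp ℝ (Matrix m m ℂ) (sandwich c)) (cornerGeneralizedChannels J c q) :=
  fun Θ hΘ => by
    simp only [LinearMap.lcomp_apply', LinearMap.comp_assoc, sandwich_comp, hce,
      ← comprMap_eq_sandwich hq, hΘ.2.1]

lemma comp_sandwich_mem_generalizedChannels (hJ : PositivelyGenerated J)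
    (hc : cᴴ * c - 1 ∈ hsPerp J) {Θ : Matrix n n ℂ →ₗ[ℂ] Matrix m m ℂ}
    (hΘ : Θ ∈ cornerGeneralizedChannels J c q) : Θ ∘ₗ sandwich c ∈ generalizedChannels J :=
  ⟨by rw [choi_comp_sandwich]; exact hΘ.1.mul_mul_conjTranspose_same _,
    fun a ha => (hΘ.2.2 a ha).trans (trace_sandwich_eq_of_mem hJ hc ha)⟩

lemma image_lcomp_sandwich_cornerGeneralizedChannels (hJ : PositivelyGenerated J)
    (hc : cᴴ * c - 1 ∈ hsPerp J) (hq : qᴴ = q) (hqc : q * c = c) (hce : c * e = q)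
    (heq : e * q = e) :
    LinearMap.lcomp ℝ (Matrix m m ℂ) (sandwich c) '' cornerGeneralizedChannels J c q =
      generalizedChannels J ∩ {Ψ | Ψ ∘ₗ sandwich (e * c) = Ψ} := by
  ext Ψ
  constructor
  · rintro ⟨Θ, hΘ, rfl⟩
    refine ⟨comp_sandwich_mem_generalizedChannels hJ hc hΘ, ?_⟩
    simp only [Set.mem_ofPred_eq, LinearMap.lcomp_apply', LinearMap.comp_assoc, sandwich_comp,
      ← Matrix.mul_assoc, hce, hqc]
  · rintro ⟨hΨ, hΨp⟩
    refine ⟨Ψ ∘ₗ sandwich e, ⟨?_, ?_, fun a ha => ?_⟩, ?_⟩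
    · rw [choi_comp_sandwich]; exact hΨ.1.mul_mul_conjTranspose_same _
    · rw [comprMap_eq_sandwich hq, LinearMap.comp_assoc, sandwich_comp, heq]
    · have hΨa : Ψ (e * (c * a * cᴴ) * eᴴ) = Ψ a := by
        simpa [Matrix.conjTranspose_mul, Matrix.mul_assoc] using LinearMap.congr_fun hΨp a
      rw [LinearMap.comp_apply, sandwich_apply, hΨa, hΨ.2 a ha, trace_sandwich_eq_of_mem hJ hc ha]
    · rw [LinearMap.lcomp_apply', LinearMap.comp_assoc, sandwich_comp, hΨp]

end Decomposition

/-- for a minimal decomposition `Φ = Λ_q ∘ χ_c` of a generalized channel,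
`Φ` is extremal in `C_J(A,B)` iff `Λ_q` is extremal in `C_{cJc*}(A_q,B)`.
Here maps on `A_q = qAq` are modelled as maps on `A` that factor through the
compression by `q`. -/
theorem extreme_iff_extreme_of_minimal_decomposition
    (J : Submodule ℂ (Matrix n n ℂ)) (hJ : PositivelyGenerated J)
    (Φ Λ : Matrix n n ℂ →ₗ[ℂ] Matrix m m ℂ) (c q : Matrix n n ℂ)
    (hq : IsSupportProj (c * cᴴ) q)
    (hdecomp : Φ = Λ ∘ₗ sandwich c)
    (hc : cᴴ * c - 1 ∈ hsPerp J)
    (hΛCP : (choi Λ).PosSemidef)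
    (hΛq : Λ ∘ₗ comprMap q = Λ)
    (hΛch : ∀ a : Matrix n n ℂ, q * a * q = a → Matrix.trace (Λ a) = Matrix.trace a) :
    Φ ∈ Set.extremePoints ℝ
        {Ψ : Matrix n n ℂ →ₗ[ℂ] Matrix m m ℂ |
          (choi Ψ).PosSemidef ∧ ∀ a ∈ J, Matrix.trace (Ψ a) = Matrix.trace a} ↔
      Λ ∈ Set.extremePoints ℝ
        {Ψ : Matrix n n ℂ →ₗ[ℂ] Matrix m m ℂ |
          (choi Ψ).PosSemidef ∧ Ψ ∘ₗ comprMap q = Ψ ∧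
            ∀ a ∈ J, Matrix.trace (Ψ (c * a * cᴴ)) = Matrix.trace (c * a * cᴴ)} := by
  obtain ⟨e, hce, heq, hp⟩ := hq.exists_pseudoInverse
  have hqc : q * c = c := hq.proj_mul_of_mul_conjTranspose
  have hΛ : Λ ∈ cornerGeneralizedChannels J c q := by
    refine ⟨hΛCP, hΛq, fun a _ => hΛch _ ?_⟩
    conv_rhs => rw [← hqc]
    simp only [Matrix.conjTranspose_mul, hq.1.eq, Matrix.mul_assoc]
  have himage := image_lcomp_sandwich_cornerGeneralizedChannels (m := m) hJ hc hq.1.eq hqc hce heq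
  have hΦ : Φ ∈ generalizedChannels J ∩ {Ψ | Ψ ∘ₗ sandwich (e * c) = Ψ} :=
    hdecomp ▸ himage ▸ Set.mem_image_of_mem _ hΛ
  calc Φ ∈ (generalizedChannels J).extremePoints ℝ
      ↔ Φ ∈ (generalizedChannels J ∩ {Ψ | Ψ ∘ₗ sandwich (e * c) = Ψ}).extremePoints ℝ := by
        rw [(isExtreme_generalizedChannels_inter J hp.isIdempotentElem).extremePoints_eq]
        exact ⟨fun h => ⟨hΦ, h⟩, And.right⟩
    _ ↔ Λ ∈ (cornerGeneralizedChannels J c q).extremePoints ℝ := by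
        rw [← himage, hdecomp]
        exact (leftInvOn_lcomp_sandwich hq.1.eq hce).map_mem_extremePoints_image_iff hΛ
end

section
/- Let J = S^{-1}(C ρ₀) with S* an injective *-homomorphism and ρ₀ = S(ρ) for an invertible state ρ. Let M be a projection-valued measure in A. Then M is extremal in M_J(A,U) if and only if the only projections p₀ ∈ A₀ with S*(p₀) ∈ {M}' are p₀ = 0 and p₀ = I. -/
open Matrix ComplexOrder

variable {n m : Type*} [Fintype n] [DecidableEq n] [Fintype m] [DecidableEq m]

/-!
A PVM `M` is extremal in `M_J` exactly when no nonzero Hermitian `X ∈ J^⊥` commutes with all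
`M u`: such an `X` with `-1 ≤ X ≤ 1` splits `M` as the midpoint of `M u (1 ± X)`, and conversely,
if `M = a N + b N'` then each `N u` lives under `M u`, so `∑ u, (N u - M u)` is such an `X`.
For `J = S⁻¹(ℂ ρ₀)` adjointness gives `J^⊥ = T({ρ₀}^⊥)`. A nontrivial projection `p₀` with
`T p₀ ∈ {M}'` yields `X = T (p₀ - c)` with `c = tr (T p₀ ρ) ∈ [0, 1]`; conversely, if
`X = T b ∈ {M}'`, then every spectral projection of `b` (a polynomial in `b`) is `0` or `1`, so `b`
is a scalar, which is `0` since `b ⊥ ρ₀` and `tr ρ₀ = 1`.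
-/

open Polynomial

theorem IsIdempotentElem.eq_zero_or_eq_one_of_eq_smul_one {K A : Type*} [Field K] [Ring A]
    [Algebra K A] {p : A} (hp : IsIdempotentElem p) {c : K} (h : p = c • 1) : p = 0 ∨ p = 1 := by
  have hcp : (1 - c) • p = 0 := by
    rw [sub_smul, one_smul, sub_eq_zero]
    nth_rw 1 [← hp.eq]
    rw [h, smul_one_mul]
  rcases smul_eq_zero.1 hcp with hc | hp0
  · right; rw [h, ← sub_eq_zero.1 hc, one_smul]
  · left; exact hp0

theorem IsStarProjection.mul_eq_zero_of_sum_eq_one {A ι : Type*} [CStarAlgebra A] [PartialOrder A]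
    [StarOrderedRing A] [Fintype ι] {M : ι → A} (hM : ∀ i, IsStarProjection (M i))
    (hsum : ∑ i, M i = 1) {i j : ι} (hij : i ≠ j) : M i * M j = 0 := by
  classical
  have hle : M i ≤ 1 - M j := by
    rw [← hsum, ← Finset.sum_erase_add _ _ (Finset.mem_univ j), add_sub_cancel_right]
    exact Finset.single_le_sum (fun w _ => (hM w).nonneg)
      (Finset.mem_erase.2 ⟨hij, Finset.mem_univ i⟩)
  have := ((hM i).le_iff_mul_eq_left (hM j).one_sub).1 hle
  rwa [mul_sub, mul_one, sub_eq_self] at this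

section MatrixProjections

variable {k : Type*} [Fintype k]

theorem IsStarProjection.trace_mul_nonneg {P ρ : Matrix k k ℂ} (hP : IsStarProjection P)
    (hρ : ρ.PosSemidef) : 0 ≤ trace (P * ρ) := by
  have hPh : Pᴴ = P := hP.isSelfAdjoint
  have := (hρ.mul_mul_conjTranspose_same P).trace_nonneg
  rwa [trace_mul_cycle, hPh, hP.isIdempotentElem.eq] at this

variable [DecidableEq k]

theorem Matrix.IsHermitian.exists_eq_smul_one_of_isStarProjection_aeval {b : Matrix k k ℂ}
    (hb : b.IsHermitian)
    (h : ∀ p : ℂ[X], IsStarProjection (aeval b p) → aeval b p = 0 ∨ aeval b p = 1) :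
    ∃ c : ℂ, b = c • 1 := by
  set U := Unitary.conjStarAlgAut ℂ (Matrix k k ℂ) hb.eigenvectorUnitary
  set ev : k → ℂ := RCLike.ofReal ∘ hb.eigenvalues
  have hbU : b = U (diagonal ev) := hb.spectral_theorem
  by_contra! hns
  obtain ⟨i, j, hij⟩ : ∃ i j, ev i ≠ ev j := by
    by_contra! hconst
    rcases isEmpty_or_nonempty k with hk | ⟨⟨i⟩⟩
    · exact hns 0 (Subsingleton.elim _ _)
    · refine hns (ev i) ?_
      have hdiag : diagonal ev = ev i • 1 := by
        ext a c
        by_cases hac : a = c <;> simp [hac, hconst c i]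
      rw [hbU, hdiag, map_smul, map_one]
  -- `p` is `1` at the eigenvalue `ev i` and `0` at the others, so `aeval b p` is a spectral
  -- projection of `b`, neither `0` nor `1`.
  set d : k → ℂ := fun a => if ev a = ev i then 1 else 0
  set p := Lagrange.basis (Finset.univ.image ev) id (ev i)
  have hnode (a : k) : ev a ∈ Finset.univ.image ev := Finset.mem_image_of_mem _ (Finset.mem_univ a)
  have hpd : ∀ a, p.eval (ev a) = d a := by
    intro a
    show p.eval (ev a) = if ev a = ev i then 1 else 0
    by_cases hai : ev a = ev i
    · rw [if_pos hai, hai]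
      exact Lagrange.eval_basis_self (v := id) (Set.injOn_id _) (hnode i)
    · rw [if_neg hai]
      exact Lagrange.eval_basis_of_ne (v := id) (Ne.symm hai) (hnode a)
  have hpb : aeval b p = U (diagonal d) := by
    rw [hbU, aeval_algHom_apply, ← diagonalAlgHom_apply ℂ, aeval_algHom_apply, aeval_pi_apply]
    simp [hpd]
  have hd : IsStarProjection (diagonal d) := by
    constructor
    · show diagonal d * diagonal d = diagonal d
      rw [diagonal_mul_diagonal]
      congr 1; funext a; by_cases hai : ev a = ev i <;> simp [d, hai]
    · show (diagonal d)ᴴ = diagonal d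
      rw [diagonal_conjTranspose]
      congr 1; funext a; by_cases hai : ev a = ev i <;> simp [d, hai]
  rcases h p (hpb ▸ hd.map U) with h0 | h1
  · rw [hpb, map_eq_zero_iff U U.injective] at h0
    simpa [d] using congrFun (congrFun h0 i) i
  · rw [hpb, map_eq_one_iff U U.injective] at h1
    simpa [d, hij.symm] using congrFun (congrFun h1 j) j

end MatrixProjections

section HilbertSchmidt

variable {k l : Type*} [Fintype k] [Fintype l]

theorem mem_hsPerp {J : Submodule ℂ (Matrix k k ℂ)} {x : Matrix k k ℂ} :
    x ∈ hsPerp J ↔ ∀ a ∈ J, trace (aᴴ * x) = 0 :=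
  Iff.rfl

theorem mem_hsPerp_span_singleton {r x : Matrix k k ℂ} :
    x ∈ hsPerp (ℂ ∙ r) ↔ trace (rᴴ * x) = 0 := by
  refine ⟨fun h => h r (Submodule.mem_span_singleton_self r), fun h a ha => ?_⟩
  obtain ⟨c, rfl⟩ := Submodule.mem_span_singleton.1 ha
  simp [h]

theorem trace_conjTranspose_mul_eq_zero_comm {a b : Matrix k k ℂ} :
    trace (aᴴ * b) = 0 ↔ trace (bᴴ * a) = 0 := by
  rw [← star_eq_zero, ← trace_conjTranspose, conjTranspose_mul, conjTranspose_conjTranspose]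

/-- `Matrix.toMatrixInnerProductSpace 1` is the Hilbert–Schmidt inner product, for which `hsPerp`
is the orthogonal complement. -/
theorem hsPerp_hsPerp [DecidableEq k] (J : Submodule ℂ (Matrix k k ℂ)) : hsPerp (hsPerp J) = J := by
  let _ : NormedAddCommGroup (Matrix k k ℂ) := toMatrixNormedAddCommGroup 1 PosDef.one
  let _ : InnerProductSpace ℂ (Matrix k k ℂ) := toMatrixInnerProductSpace 1 PosSemidef.one
  have hsPerp_eq_orthogonal (K : Submodule ℂ (Matrix k k ℂ)) : hsPerp K = Kᗮ := by
    ext x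
    change (∀ a ∈ K, _) ↔ ∀ a ∈ K, (x * 1 * aᴴ).trace = 0
    simp [trace_mul_comm x]
  rw [hsPerp_eq_orthogonal, hsPerp_eq_orthogonal, Submodule.orthogonal_orthogonal]

theorem hsPerp_comap_eq_map [DecidableEq k] [DecidableEq l] {S : Matrix k k ℂ →ₗ[ℂ] Matrix l l ℂ}
    {T : Matrix l l ℂ →ₗ[ℂ] Matrix k k ℂ}
    (hadj : ∀ a b, trace ((T b)ᴴ * a) = trace (bᴴ * S a)) (W : Submodule ℂ (Matrix l l ℂ)) :
    hsPerp (W.comap S) = (hsPerp W).map T := by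
  have h : hsPerp ((hsPerp W).map T) = W.comap S := by
    ext x
    simp only [mem_hsPerp, Submodule.mem_map, Submodule.mem_comap, forall_exists_index, and_imp,
      forall_apply_eq_imp_iff₂, hadj]
    conv_rhs => rw [← hsPerp_hsPerp W]
    rfl
  rw [← h, hsPerp_hsPerp]

theorem mem_hsPerp_span_singleton_apply_iff {S : Matrix k k ℂ →ₗ[ℂ] Matrix l l ℂ}
    {T : Matrix l l ℂ →ₗ[ℂ] Matrix k k ℂ}
    (hadj : ∀ a b, trace ((T b)ᴴ * a) = trace (bᴴ * S a)) (ρ : Matrix k k ℂ) (x : Matrix l l ℂ) :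
    x ∈ hsPerp (ℂ ∙ S ρ) ↔ trace ((T x)ᴴ * ρ) = 0 := by
  rw [mem_hsPerp_span_singleton, trace_conjTranspose_mul_eq_zero_comm, hadj]

end HilbertSchmidt

section GeneralizedPOVM

open scoped MatrixOrder Matrix.Norms.L2Operator

variable {k : Type*} [Fintype k]

theorem IsStarProjection.posSemidef {P : Matrix k k ℂ} (hP : IsStarProjection P) : P.PosSemidef :=
  nonneg_iff_posSemidef.1 hP.nonneg

variable [DecidableEq k]

/-- The generalized POVMs `M_J(A, U)`. -/
def generalizedPOVMs (J : Submodule ℂ (Matrix k k ℂ)) (U : Type*) [Fintype U] :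
    Set (U → Matrix k k ℂ) :=
  {N | (∀ u, (N u).PosSemidef) ∧ ∑ u, N u - 1 ∈ hsPerp J}

variable {U : Type*} [Fintype U] {J : Submodule ℂ (Matrix k k ℂ)} {M : U → Matrix k k ℂ}

theorem mem_generalizedPOVMs_mul_one_add (hM : ∀ u, IsStarProjection (M u)) (hsum : ∑ u, M u = 1)
    {X : Matrix k k ℂ} (hX : X ∈ hsPerp J) (hXM : ∀ u, Commute X (M u))
    (hpos : (1 + X).PosSemidef) : (fun u => M u * (1 + X)) ∈ generalizedPOVMs J U := by
  refine ⟨fun u => ?_, ?_⟩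
  · have hMh : (M u)ᴴ = M u := (hM u).isSelfAdjoint
    have hconj : M u * (1 + X) = (M u)ᴴ * (1 + X) * M u := by
      rw [hMh, mul_assoc, ((Commute.one_left _).add_left (hXM u)).eq,
        ← mul_assoc, (hM u).isIdempotentElem.eq]
    show (M u * (1 + X)).PosSemidef
    rw [hconj]
    exact hpos.conjTranspose_mul_mul_same (M u)
  · rwa [← Finset.sum_mul, hsum, one_mul, add_sub_cancel_left]

theorem eq_zero_of_mem_extremePoints_generalizedPOVMs
    (hext : M ∈ (generalizedPOVMs J U).extremePoints ℝ) (hM : ∀ u, IsStarProjection (M u))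
    (hsum : ∑ u, M u = 1) {X : Matrix k k ℂ} (hX : X ∈ hsPerp J) (hXM : ∀ u, Commute X (M u))
    (hpos : (1 + X).PosSemidef) (hneg : (1 - X).PosSemidef) : X = 0 := by
  have hplus := mem_generalizedPOVMs_mul_one_add hM hsum hX hXM hpos
  have hminus := mem_generalizedPOVMs_mul_one_add hM hsum (neg_mem hX)
    (fun u => (hXM u).neg_left) (by rwa [← sub_eq_add_neg])
  have hmid : M ∈ openSegment ℝ (fun u => M u * (1 + X)) (fun u => M u * (1 + -X)) := by
    refine ⟨1 / 2, 1 / 2, by norm_num, by norm_num, by norm_num, funext fun u => ?_⟩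
    simp only [Pi.add_apply, Pi.smul_apply, mul_add, mul_one, mul_neg]
    module
  have hMX : ∀ u, M u * X = 0 := fun u => by
    simpa [mul_add] using congrFun (hext.2 hplus hminus hmid) u
  rw [← one_mul X, ← hsum, Finset.sum_mul]
  exact Finset.sum_eq_zero fun u _ => hMX u

theorem mem_extremePoints_generalizedPOVMs (hM : ∀ u, IsStarProjection (M u))
    (hsum : ∑ u, M u = 1)
    (h : ∀ X ∈ hsPerp J, X.IsHermitian → (∀ u, Commute X (M u)) → X = 0) :
    M ∈ (generalizedPOVMs J U).extremePoints ℝ := by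
  have hMmem : M ∈ generalizedPOVMs J U :=
    ⟨fun u => (hM u).posSemidef, by simp [hsum, zero_mem]⟩
  refine ⟨hMmem, fun N hN N' hN' ⟨a, b, ha, hb, _, hNN'⟩ => ?_⟩
  -- `a • N u ≤ M u` forces `N u` to live under the projection `M u`
  have hsupp : ∀ u, N u * M u = N u ∧ M u * N u = N u := fun u => by
    have hle : a • N u ≤ M u := by
      rw [le_iff, ← congrFun hNN' u, Pi.add_apply, Pi.smul_apply, Pi.smul_apply,
        add_sub_cancel_left]
      exact (hN'.1 u).smul hb.le
    obtain ⟨hr, hl⟩ :=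
      (hM u).mul_right_and_mul_left_of_nonneg_of_le ((hN.1 u).smul ha.le).nonneg hle
    rw [smul_mul_assoc] at hr
    rw [mul_smul_comm] at hl
    exact ⟨smul_right_injective _ ha.ne' hr, smul_right_injective _ ha.ne' hl⟩
  set D : U → Matrix k k ℂ := fun u => N u - M u
  have hD : ∀ u, D u * M u = D u ∧ M u * D u = D u := fun u => by
    simp only [D, sub_mul, mul_sub, (hsupp u).1, (hsupp u).2, (hM u).isIdempotentElem.eq, and_self]
  have hDM : ∀ u, (∑ v, D v) * M u = D u ∧ M u * ∑ v, D v = D u := fun u => by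
    rw [Finset.sum_mul, Finset.mul_sum]
    constructor
    · rw [Finset.sum_eq_single u (fun v _ hvu => ?_) (by simp), (hD u).1]
      rw [← (hD v).1, mul_assoc, IsStarProjection.mul_eq_zero_of_sum_eq_one hM hsum hvu, mul_zero]
    · rw [Finset.sum_eq_single u (fun v _ hvu => ?_) (by simp), (hD u).2]
      rw [← (hD v).2, ← mul_assoc, IsStarProjection.mul_eq_zero_of_sum_eq_one hM hsum hvu.symm,
        zero_mul]
  have hΔ : ∑ v, D v = 0 := by
    refine h _ ?_ ?_ fun u => ?_
    · simpa [D, Finset.sum_sub_distrib, hsum] using hN.2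
    · exact isSelfAdjoint_sum _ fun v _ => (hN.1 v).1.sub (hM v).isSelfAdjoint
    · rw [commute_iff_eq, (hDM u).1, (hDM u).2]
  funext u
  exact sub_eq_zero.1 ((hDM u).1.symm.trans (by rw [hΔ, zero_mul]))

end GeneralizedPOVM

section AdjointOfStarAlgHom

variable {k l U : Type*} [Fintype k] [DecidableEq k] [Fintype l] [DecidableEq l] [Fintype U]
  {S : Matrix k k ℂ →ₗ[ℂ] Matrix l l ℂ} {T : Matrix l l ℂ →⋆ₐ[ℂ] Matrix k k ℂ}
  {M : U → Matrix k k ℂ}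

theorem eq_zero_or_eq_one_of_mem_extremePoints
    (hadj : ∀ a b, trace ((T b)ᴴ * a) = trace (bᴴ * S a)) (hTinj : Function.Injective T)
    {ρ : Matrix k k ℂ} (hρ : ρ.PosSemidef) (hρtr : trace ρ = 1)
    (hM : ∀ u, IsStarProjection (M u)) (hsum : ∑ u, M u = 1)
    (hext : M ∈ (generalizedPOVMs ((ℂ ∙ S ρ).comap S) U).extremePoints ℝ)
    {p : Matrix l l ℂ} (hp : IsStarProjection p) (hpM : ∀ u, Commute (T p) (M u)) :
    p = 0 ∨ p = 1 := by
  have hP : IsStarProjection (T p) := hp.map T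
  -- the scalar for which `p - c • 1` is Hilbert–Schmidt orthogonal to `S ρ`
  set c := trace (T p * ρ)
  have hc0 : 0 ≤ c := hP.trace_mul_nonneg hρ
  have hc1 : 0 ≤ 1 - c := by simpa [sub_mul, hρtr] using hP.one_sub.trace_mul_nonneg hρ
  have hTX : T (p - c • 1) = T p - c • 1 := by rw [map_sub, map_smul, map_one]
  have hX : T (p - c • 1) = 0 := by
    refine eq_zero_of_mem_extremePoints_generalizedPOVMs hext hM hsum ?_ (fun u => ?_) ?_ ?_
    · rw [hsPerp_comap_eq_map (T := T.toLinearMap) hadj]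
      refine Submodule.mem_map_of_mem
        ((mem_hsPerp_span_singleton_apply_iff (T := T.toLinearMap) hadj ρ _).2 ?_)
      have hPh : (T p)ᴴ = T p := hP.isSelfAdjoint
      simp only [AlgHom.toLinearMap_apply, StarAlgHom.coe_toAlgHom]
      rw [hTX, conjTranspose_sub, conjTranspose_smul, hPh, (IsSelfAdjoint.of_nonneg hc0).star_eq,
        conjTranspose_one, sub_mul, trace_sub, smul_mul, one_mul, trace_smul, hρtr, smul_eq_mul,
        mul_one, sub_self]
    · rw [hTX]
      exact (hpM u).sub_left ((Commute.one_left _).smul_left c)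
    · rw [hTX, show 1 + (T p - c • 1) = (1 - c) • 1 + T p by module]
      exact (PosSemidef.one.smul hc1).add hP.posSemidef
    · rw [hTX, show 1 - (T p - c • 1) = c • 1 + (1 - T p) by module]
      exact (PosSemidef.one.smul hc0).add hP.one_sub.posSemidef
  exact hp.isIdempotentElem.eq_zero_or_eq_one_of_eq_smul_one
    (sub_eq_zero.1 (hTinj (hX.trans (map_zero T).symm)))

theorem mem_extremePoints_of_forall_isStarProjection
    (hadj : ∀ a b, trace ((T b)ᴴ * a) = trace (bᴴ * S a)) (hTinj : Function.Injective T)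
    {ρ₀ : Matrix l l ℂ} (hρ₀ : trace ρ₀ ≠ 0)
    (hM : ∀ u, IsStarProjection (M u)) (hsum : ∑ u, M u = 1)
    (h : ∀ p, IsStarProjection p → (∀ u, Commute (T p) (M u)) → p = 0 ∨ p = 1) :
    M ∈ (generalizedPOVMs ((ℂ ∙ ρ₀).comap S) U).extremePoints ℝ := by
  refine mem_extremePoints_generalizedPOVMs hM hsum fun X hX hXh hXM => ?_
  rw [hsPerp_comap_eq_map (T := T.toLinearMap) hadj] at hX
  obtain ⟨b, hb, rfl⟩ := hX
  have hbh : b.IsHermitian := hTinj (by rw [← star_eq_conjTranspose, map_star]; exact hXh)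
  obtain ⟨c, rfl⟩ := hbh.exists_eq_smul_one_of_isStarProjection_aeval fun p hp =>
    h _ hp fun u => by
      rw [← aeval_algHom_apply]
      exact (Algebra.commute_of_mem_adjoin_singleton_of_commute
        (aeval_mem_adjoin_singleton ℂ (T b)) (hXM u).symm).symm
  have hc : c = 0 := by simpa [mem_hsPerp_span_singleton, trace_conjTranspose, hρ₀] using hb
  simp [hc]

end AdjointOfStarAlgHom

theorem extreme_PVM_iff_commutant_projections_general
    (S : Matrix n n ℂ →ₗ[ℂ] Matrix m m ℂ) (T : Matrix m m ℂ →ₗ[ℂ] Matrix n n ℂ)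
    (hadj : ∀ (a : Matrix n n ℂ) (b : Matrix m m ℂ),
      Matrix.trace ((T b)ᴴ * a) = Matrix.trace (bᴴ * S a))
    (hTinj : Function.Injective T)
    (hTmul : ∀ x y : Matrix m m ℂ, T (x * y) = T x * T y)
    (hTstar : ∀ x : Matrix m m ℂ, T xᴴ = (T x)ᴴ)
    (hTone : T 1 = 1)
    (ρ : Matrix n n ℂ) (hρ : ρ.PosDef) (hρtr : Matrix.trace ρ = 1)
    (ρ₀ : Matrix m m ℂ) (hρ₀ : ρ₀ = S ρ)
    {U : Type*} [Fintype U]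
    (M : U → Matrix n n ℂ)
    (hproj : ∀ u, (M u).IsHermitian ∧ M u * M u = M u)
    (hsum : ∑ u, M u = 1) :
    M ∈ Set.extremePoints ℝ
        {N : U → Matrix n n ℂ |
          (∀ u, (N u).PosSemidef) ∧
            ∀ a : Matrix n n ℂ, (∃ t : ℂ, S a = t • ρ₀) →
              Matrix.trace (aᴴ * ((∑ u, N u) - 1)) = 0} ↔
      ∀ p₀ : Matrix m m ℂ, p₀.IsHermitian → p₀ * p₀ = p₀ →
        (∀ u, T p₀ * M u = M u * T p₀) → p₀ = 0 ∨ p₀ = 1 := by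
  subst hρ₀
  let Tₐ : Matrix m m ℂ →⋆ₐ[ℂ] Matrix n n ℂ :=
    { AlgHom.ofLinearMap T hTone hTmul with map_star' := hTstar }
  have hM (u : U) : IsStarProjection (M u) := ⟨(hproj u).2, (hproj u).1⟩
  have hset : {N : U → Matrix n n ℂ | (∀ u, (N u).PosSemidef) ∧
      ∀ a : Matrix n n ℂ, (∃ t : ℂ, S a = t • S ρ) → trace (aᴴ * ((∑ u, N u) - 1)) = 0} =
      generalizedPOVMs ((ℂ ∙ S ρ).comap S) U := by
    ext N
    simp [generalizedPOVMs, mem_hsPerp, Submodule.mem_span_singleton, eq_comm]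
  have htr : trace (S ρ) = 1 := by simpa [hTone, hρtr] using (hadj ρ 1).symm
  rw [hset]
  exact ⟨fun hext p₀ hp₀ hp₀₂ hp₀M => eq_zero_or_eq_one_of_mem_extremePoints (T := Tₐ) hadj hTinj
      hρ.posSemidef hρtr hM hsum hext ⟨hp₀₂, hp₀⟩ hp₀M,
    fun h => mem_extremePoints_of_forall_isStarProjection (T := Tₐ) hadj hTinj (htr ▸ one_ne_zero)
      hM hsum fun p hp hpM => h p hp.isSelfAdjoint hp.isIdempotentElem fun u => (hpM u).eq⟩

/-- for `J = S⁻¹(ℂ ρ₀)` with `S* = T` an injective unital *-homomorphism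
and `ρ₀ = S ρ` for an invertible state `ρ`, a PVM `M` is extremal in `M_J(A,U)` iff the
only projections `p₀ ∈ A₀` with `S*(p₀) ∈ {M}'` are `p₀ = 0` and `p₀ = I`. -/
theorem extreme_PVM_iff_commutant_projections
    (S : Matrix n n ℂ →ₗ[ℂ] Matrix m m ℂ) (T : Matrix m m ℂ →ₗ[ℂ] Matrix n n ℂ)
    (hSCP : (choi S).PosSemidef) (hStp : ∀ a, Matrix.trace (S a) = Matrix.trace a)
    (hadj : ∀ (a : Matrix n n ℂ) (b : Matrix m m ℂ),
      Matrix.trace ((T b)ᴴ * a) = Matrix.trace (bᴴ * S a))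
    (hTinj : Function.Injective T)
    (hTmul : ∀ x y : Matrix m m ℂ, T (x * y) = T x * T y)
    (hTstar : ∀ x : Matrix m m ℂ, T xᴴ = (T x)ᴴ)
    (hTone : T 1 = 1)
    (ρ : Matrix n n ℂ) (hρ : ρ.PosDef) (hρtr : Matrix.trace ρ = 1)
    (ρ₀ : Matrix m m ℂ) (hρ₀ : ρ₀ = S ρ)
    {U : Type*} [Fintype U]
    (M : U → Matrix n n ℂ)
    (hproj : ∀ u, (M u).IsHermitian ∧ M u * M u = M u)
    (hsum : ∑ u, M u = 1) :
    M ∈ Set.extremePoints ℝ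
        {N : U → Matrix n n ℂ |
          (∀ u, (N u).PosSemidef) ∧
            ∀ a : Matrix n n ℂ, (∃ t : ℂ, S a = t • ρ₀) →
              Matrix.trace (aᴴ * ((∑ u, N u) - 1)) = 0} ↔
      ∀ p₀ : Matrix m m ℂ, p₀.IsHermitian → p₀ * p₀ = p₀ →
        (∀ u, T p₀ * M u = M u * T p₀) → p₀ = 0 ∨ p₀ = 1 :=
  extreme_PVM_iff_commutant_projections_general S T hadj hTinj hTmul hTstar hTone ρ hρ hρtr ρ₀ hρ₀ M
    hproj hsum
end
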